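/- In a convex contribution game with friendship, the price of anarchy with respect to pairwise equilibria is at most 1+Q, where Q is the maximum over edges (u,v) of g^u_{uv}(B_u,B_v)/g^v_{uv}(B_u,B_v) with g^u_{uv}(x,y)=f^u_{uv}(x,y)+α₁f^v_{uv}(x,y). -/
import Mathlib


open Finset

variable {V : Type*} [Fintype V] [DecidableEq V]

/-- `partnerReward r M x` is the reward share that node `x` obtains in matching `M`:
`r x y` if `x` is matched to `y`, and `0` if `x` is unmatched. -/
def partnerReward (r : V → V → ℝ) (M : V → Option V) (x : V) : ℝ :=
  match M x with
  | some y => r x y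
  | none => 0

/-- `M : V → Option V` encodes a matching in graph `G`. -/
def IsMatching (G : SimpleGraph V) (M : V → Option V) : Prop :=
  (∀ u v, M u = some v → G.Adj u v) ∧ (∀ u v, M u = some v → M v = some u)

/-- The matching obtained when `u` and `v` abandon their current partners (if any)
and match to each other. -/
def rematch (M : V → Option V) (u v : V) : V → Option V :=
  fun x => if x = u then some v else if x = v then some u
    else if M x = some u ∨ M x = some v then none else M x

/-- The perceived (friendship) utility of node `v`:
`U_v = R_v + ∑_d α_d ∑_{u ∈ N_d(v)} R_u`, where the sum over nodes at distance `d`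
is encoded via `α (G.dist v u)` (with `α 0 = 0` for unreachable/irrelevant pairs). -/
noncomputable def util (G : SimpleGraph V) (r : V → V → ℝ) (α : ℕ → ℝ)
    (M : V → Option V) (v : V) : ℝ :=
  partnerReward r M v +
    ∑ u ∈ univ.filter (fun u => u ≠ v), α (G.dist v u) * partnerReward r M u

/-- `(u,v)` is a blocking pair for `M`: they are adjacent, not matched to each other,
and both strictly increase their perceived utility by matching to each other. -/
def IsBlockingPair (G : SimpleGraph V) (r : V → V → ℝ) (α : ℕ → ℝ)
    (M : V → Option V) (u v : V) : Prop :=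
  G.Adj u v ∧ M u ≠ some v ∧
    util G r α M u < util G r α (rematch M u v) u ∧
    util G r α M v < util G r α (rematch M u v) v

/-- A stable matching: a matching admitting no blocking pair. -/
def StableMatching (G : SimpleGraph V) (r : V → V → ℝ) (α : ℕ → ℝ)
    (M : V → Option V) : Prop :=
  IsMatching G M ∧ ∀ u v, ¬ IsBlockingPair G r α M u v

/-- Total weight of a matching under equal sharing (each edge counted once). -/
noncomputable def matchWeight (r : V → V → ℝ) (M : V → Option V) : ℝ :=
  (∑ v, partnerReward r M v) / 2

/-- Total reward of a matching under general reward sharing (sum of all shares). -/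
noncomputable def totalWeight (r : V → V → ℝ) (M : V → Option V) : ℝ :=
  ∑ v, partnerReward r M v

/-- Admissible friendship parameters: `1 ≥ α₁ ≥ α₂ ≥ … ≥ 0` (and `α 0 = 0` as a
convention so that only distances `d ≥ 1` contribute). -/
def FriendshipVec (α : ℕ → ℝ) : Prop :=
  α 0 = 0 ∧ α 1 ≤ 1 ∧ (∀ d, 0 ≤ α d) ∧ ∀ d e, 1 ≤ d → d ≤ e → α e ≤ α d
/-- A reward function of class C₀: nonnegative, nondecreasing and convex in each
argument (on the nonnegative reals), and zero whenever either contribution is 0. -/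
def C0fun (f : ℝ → ℝ → ℝ) : Prop :=
  (∀ x y, 0 ≤ f x y) ∧
  (∀ y, MonotoneOn (fun x => f x y) (Set.Ici 0)) ∧
  (∀ x, MonotoneOn (fun y => f x y) (Set.Ici 0)) ∧
  (∀ y, ConvexOn ℝ (Set.Ici 0) (fun x => f x y)) ∧
  (∀ x, ConvexOn ℝ (Set.Ici 0) (fun y => f x y)) ∧
  (∀ x, f x 0 = 0) ∧ (∀ y, f 0 y = 0)

/-- A valid strategy profile: nonnegative contributions, only on incident edges,
with total contribution of each node at most its budget. -/
def ValidProfile (G : SimpleGraph V) (B : V → ℝ) (s : V → V → ℝ) : Prop :=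
  (∀ v u, 0 ≤ s v u) ∧ (∀ v u, ¬ G.Adj v u → s v u = 0) ∧ (∀ v, ∑ u, s v u ≤ B v)

/-- A valid strategy profile with tight budget constraints: each node spends
exactly its budget. -/
def ValidTightProfile (G : SimpleGraph V) (B : V → ℝ) (s : V → V → ℝ) : Prop :=
  (∀ v u, 0 ≤ s v u) ∧ (∀ v u, ¬ G.Adj v u → s v u = 0) ∧ (∀ v, ∑ u, s v u = B v)

/-- The total reward collected by node v, where f v u is the reward function
giving v's reward share on edge (v,u). -/
noncomputable def nodeReward (G : SimpleGraph V) [DecidableRel G.Adj]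
    (f : V → V → ℝ → ℝ → ℝ) (s : V → V → ℝ) (v : V) : ℝ :=
  ∑ u ∈ G.neighborFinset v, f v u (s v u) (s u v)

/-- The perceived (friendship) utility of node v in the contribution game. -/
noncomputable def ccgUtil (G : SimpleGraph V) [DecidableRel G.Adj]
    (f : V → V → ℝ → ℝ → ℝ) (α : ℕ → ℝ) (s : V → V → ℝ) (v : V) : ℝ :=
  nodeReward G f s v +
    ∑ u ∈ univ.filter (fun u => u ≠ v), α (G.dist v u) * nodeReward G f s u

/-- Pairwise equilibrium: no improving unilateral deviation, and no bilateral
deviation strictly improving the perceived utility of both deviators. -/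
def PairwiseEq (G : SimpleGraph V) [DecidableRel G.Adj] (B : V → ℝ)
    (f : V → V → ℝ → ℝ → ℝ) (α : ℕ → ℝ) (s : V → V → ℝ) : Prop :=
  ValidProfile G B s ∧
  (∀ v s', ValidProfile G B s' → (∀ x, x ≠ v → s' x = s x) →
    ccgUtil G f α s' v ≤ ccgUtil G f α s v) ∧
  (∀ u v s', ValidProfile G B s' → (∀ x, x ≠ u → x ≠ v → s' x = s x) →
    ¬ (ccgUtil G f α s u < ccgUtil G f α s' u ∧
        ccgUtil G f α s v < ccgUtil G f α s' v))

/-- Pairwise equilibrium under tight budget constraints. -/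
def PairwiseEqTight (G : SimpleGraph V) [DecidableRel G.Adj] (B : V → ℝ)
    (f : V → V → ℝ → ℝ → ℝ) (α : ℕ → ℝ) (s : V → V → ℝ) : Prop :=
  ValidTightProfile G B s ∧
  (∀ v s', ValidTightProfile G B s' → (∀ x, x ≠ v → s' x = s x) →
    ccgUtil G f α s' v ≤ ccgUtil G f α s v) ∧
  (∀ u v s', ValidTightProfile G B s' → (∀ x, x ≠ u → x ≠ v → s' x = s x) →
    ¬ (ccgUtil G f α s u < ccgUtil G f α s' u ∧
        ccgUtil G f α s v < ccgUtil G f α s' v))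


section CCGAux
set_option linter.unusedSectionVars false
variable {V : Type*} [Fintype V] [DecidableEq V]

variable {V : Type*} [Fintype V] [DecidableEq V]

lemma ccg_sum_ite_two {t : Finset V} {u v : V} (huv : u ≠ v) {a b : ℝ}
    (ha : 0 ≤ a) (hb : 0 ≤ b) :
    ∑ y ∈ t, (if y = u then a else if y = v then b else 0) ≤ a + b := by
  have h : ∀ y ∈ t, (if y = u then a else if y = v then b else 0)
      ≤ (if y = u then a else 0) + (if y = v then b else 0) := by
    intro y _
    by_cases h1 : y = u
    · subst h1; simp [huv, hb]
    · by_cases h2 : y = v <;> simp [h1, h2, ha, hb, huv.symm]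
  calc ∑ y ∈ t, (if y = u then a else if y = v then b else 0)
      ≤ ∑ y ∈ t, ((if y = u then a else 0) + (if y = v then b else 0)) :=
        Finset.sum_le_sum h
    _ = (if u ∈ t then a else 0) + (if v ∈ t then b else 0) := by
        rw [Finset.sum_add_distrib, Finset.sum_ite_eq' t u fun _ => a,
          Finset.sum_ite_eq' t v fun _ => b]
    _ ≤ a + b := add_le_add (by split_ifs <;> simp [ha]) (by split_ifs <;> simp [hb])

lemma ccg_convex_scale {g : ℝ → ℝ} (hg : ConvexOn ℝ (Set.Ici 0) g) (hg0 : g 0 = 0)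
    {x b : ℝ} (hx : 0 ≤ x) (hxb : x ≤ b) (hb : 0 < b) : g x ≤ x / b * g b := by
  have h1 : (0:ℝ) ∈ Set.Ici (0:ℝ) := Set.mem_Ici.mpr le_rfl
  have h2 : b ∈ Set.Ici (0:ℝ) := Set.mem_Ici.mpr hb.le
  have ha : (0:ℝ) ≤ 1 - x / b := by
    have : x / b ≤ 1 := (div_le_one hb).mpr hxb
    linarith
  have hb2 : 0 ≤ x / b := div_nonneg hx hb.le
  have := hg.2 h1 h2 ha hb2 (by ring)
  simpa [smul_eq_mul, hg0, div_mul_cancel₀ x hb.ne'] using this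


lemma ccg_f_scale {f : ℝ → ℝ → ℝ} (hf : C0fun f) {x y bu bv : ℝ}
    (hx : 0 ≤ x) (hy : 0 ≤ y) (hxb : x ≤ bu) (hyb : y ≤ bv) :
    f x y ≤ (if bu = 0 then 0 else x / bu) * (if bv = 0 then 0 else y / bv) * f bu bv := by
  obtain ⟨hpos, _, _, hcx, hcy, hx0, h0y⟩ := hf
  by_cases hu : bu = 0
  · have hx' : x = 0 := le_antisymm (hu ▸ hxb) hx
    simp [hu, hx', h0y]
  by_cases hv : bv = 0
  · have hy' : y = 0 := le_antisymm (hv ▸ hyb) hy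
    simp [hv, hy', hx0]
  have hbu : 0 < bu := lt_of_le_of_ne (hx.trans hxb) (Ne.symm hu)
  have hbv : 0 < bv := lt_of_le_of_ne (hy.trans hyb) (Ne.symm hv)
  simp only [hu, hv, if_false]
  calc f x y ≤ x / bu * f bu y := ccg_convex_scale (hcx y) (h0y y) hx hxb hbu
    _ ≤ x / bu * (y / bv * f bu bv) := by
        refine mul_le_mul_of_nonneg_left ?_ (div_nonneg hx hbu.le)
        exact ccg_convex_scale (hcy bu) (hx0 bu) hy hyb hbv
    _ = x / bu * (y / bv) * f bu bv := by ring

lemma ccg_nbr_sum (G : SimpleGraph V) [DecidableRel G.Adj] (u : V) (g : V → ℝ) :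
    ∑ v ∈ G.neighborFinset u, g v = ∑ v, if G.Adj u v then g v else 0 := by
  have h : G.neighborFinset u = univ.filter (G.Adj u) := by ext w; simp
  rw [h, ← Finset.sum_filter]

lemma ccg_adj_sum_comm (G : SimpleGraph V) [DecidableRel G.Adj] (F : V → V → ℝ) :
    ∑ u, ∑ v ∈ G.neighborFinset u, F u v = ∑ u, ∑ v ∈ G.neighborFinset u, F v u := by
  simp only [ccg_nbr_sum]
  rw [Finset.sum_comm]
  refine Finset.sum_congr rfl fun u _ => Finset.sum_congr rfl fun v _ => ?_
  exact if_congr (G.adj_comm v u) rfl rfl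

lemma ccg_nodeReward_nonneg (G : SimpleGraph V) [DecidableRel G.Adj]
    {f : V → V → ℝ → ℝ → ℝ} (hf : ∀ u v, G.Adj u v → C0fun (f u v))
    (s : V → V → ℝ) (x : V) : 0 ≤ nodeReward G f s x :=
  Finset.sum_nonneg fun w hw =>
    (hf x w ((SimpleGraph.mem_neighborFinset _ _ _).mp hw)).1 _ _

lemma ccg_witness (G : SimpleGraph V) [DecidableRel G.Adj] (B : V → ℝ)
    (f : V → V → ℝ → ℝ → ℝ) (α : ℕ → ℝ) (s t : V → V → ℝ) (u v : V)
    (hf : ∀ u v, G.Adj u v → C0fun (f u v))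
    (hα : FriendshipVec α)
    (huv : G.Adj u v)
    (htu : t u = fun w => if w = v then B u else 0)
    (htv : t v = fun w => if w = u then B v else 0)
    (hto : ∀ x, x ≠ u → x ≠ v → t x = s x)
    (hU : ccgUtil G f α t u ≤ ccgUtil G f α s u) :
    f u v (B u) (B v) + α 1 * f v u (B v) (B u) ≤
      (nodeReward G f s u + α 1 * ∑ w ∈ G.neighborFinset u, f w u (s w u) (s u w)) +
      (nodeReward G f s v + α 1 * ∑ w ∈ G.neighborFinset v, f w v (s w v) (s v w)) := by
  obtain ⟨hα0, hα1, hαnn, hαmono⟩ := hα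
  have hne : u ≠ v := G.ne_of_adj huv
  have hRu : nodeReward G f t u = f u v (B u) (B v) := by
    unfold nodeReward
    have hterm : ∀ w ∈ G.neighborFinset u, f u w (t u w) (t w u)
        = if w = v then f u v (B u) (B v) else 0 := by
      intro w hw
      have hadj := (SimpleGraph.mem_neighborFinset _ _ _).mp hw
      rw [htu]
      by_cases hwv : w = v
      · subst hwv; simp [htv, hne]
      · simp only [hwv, if_false]
        exact (hf u w hadj).2.2.2.2.2.2 _
    rw [Finset.sum_congr rfl hterm, Finset.sum_ite_eq' _ v fun _ => f u v (B u) (B v)]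
    simp [SimpleGraph.mem_neighborFinset, huv]
  have hRv : nodeReward G f t v = f v u (B v) (B u) := by
    unfold nodeReward
    have hterm : ∀ w ∈ G.neighborFinset v, f v w (t v w) (t w v)
        = if w = u then f v u (B v) (B u) else 0 := by
      intro w hw
      have hadj := (SimpleGraph.mem_neighborFinset _ _ _).mp hw
      rw [htv]
      by_cases hwu : w = u
      · subst hwu; simp [htu, hne.symm]
      · simp only [hwu, if_false]
        exact (hf v w hadj).2.2.2.2.2.2 _
    rw [Finset.sum_congr rfl hterm, Finset.sum_ite_eq' _ u fun _ => f v u (B v) (B u)]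
    simp [SimpleGraph.mem_neighborFinset, huv.symm]
  have hd : G.dist u v = 1 := SimpleGraph.dist_eq_one_iff_adj.mpr huv
  have hvm : v ∈ univ.filter (fun w => w ≠ u) := by simp [hne.symm]
  have hsplit : ∀ r : V → V → ℝ, ccgUtil G f α r u = nodeReward G f r u
      + α 1 * nodeReward G f r v
      + ∑ w ∈ (univ.filter (fun w => w ≠ u)).erase v, α (G.dist u w) * nodeReward G f r w := by
    intro r
    unfold ccgUtil
    rw [← Finset.add_sum_erase _ _ hvm, hd]
    ring
  rw [hsplit t, hsplit s, hRu, hRv] at hU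
  -- bound the tail sum difference
  set E := (univ.filter (fun w => w ≠ u)).erase v with hE
  have hterm : ∀ w ∈ E,
      α (G.dist u w) * nodeReward G f s w - α (G.dist u w) * nodeReward G f t w
        ≤ α 1 * ((if G.Adj w u then f w u (s w u) (s u w) else 0)
            + (if G.Adj w v then f w v (s w v) (s v w) else 0)) := by
    intro w hw
    have hw1 : w ≠ v := (Finset.mem_erase.mp hw).1
    have hw2 : w ≠ u := by
      have := (Finset.mem_erase.mp hw).2; simpa using this
    have htw : t w = s w := hto w hw2 hw1
    set A := (if G.Adj w u then f w u (s w u) (s u w) else 0) with hA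
    set Bb := (if G.Adj w v then f w v (s w v) (s v w) else 0) with hBb
    have hA0 : 0 ≤ A := by
      rw [hA]; split_ifs with h
      · exact (hf w u h).1 _ _
      · exact le_rfl
    have hB0 : 0 ≤ Bb := by
      rw [hBb]; split_ifs with h
      · exact (hf w v h).1 _ _
      · exact le_rfl
    have hDeq : nodeReward G f s w - nodeReward G f t w
        = ∑ y ∈ G.neighborFinset w, (if y = u then A else if y = v then Bb else 0) := by
      unfold nodeReward
      rw [← Finset.sum_sub_distrib]
      refine Finset.sum_congr rfl fun y hy => ?_
      have hadj := (SimpleGraph.mem_neighborFinset _ _ _).mp hy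
      rw [htw]
      by_cases hyu : y = u
      · simp only [hyu] at hadj ⊢
        have h0 : t u w = 0 := by rw [htu]; simp [hw1]
        rw [h0, (hf w u hadj).2.2.2.2.2.1 (s w u)]
        simp [hA, hadj]
      · by_cases hyv : y = v
        · simp only [hyv] at hadj ⊢
          have h0 : t v w = 0 := by rw [htv]; simp [hw2]
          rw [h0, (hf w v hadj).2.2.2.2.2.1 (s w v)]
          simp [hBb, hadj, hne.symm]
        · rw [hto y hyu hyv]
          simp [hyu, hyv]
    have hDle : nodeReward G f s w - nodeReward G f t w ≤ A + Bb := by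
      rw [hDeq]; exact ccg_sum_ite_two hne hA0 hB0
    have hD0 : 0 ≤ nodeReward G f s w - nodeReward G f t w := by
      rw [hDeq]
      refine Finset.sum_nonneg fun y _ => ?_
      split_ifs <;> [exact hA0; exact hB0; exact le_rfl]
    have hαle : α (G.dist u w) ≤ α 1 := by
      rcases Nat.eq_zero_or_pos (G.dist u w) with h | h
      · rw [h, hα0]; exact hαnn 1
      · exact hαmono 1 _ le_rfl h
    calc α (G.dist u w) * nodeReward G f s w - α (G.dist u w) * nodeReward G f t w
        = α (G.dist u w) * (nodeReward G f s w - nodeReward G f t w) := by ring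
      _ ≤ α 1 * (nodeReward G f s w - nodeReward G f t w) :=
          mul_le_mul_of_nonneg_right hαle hD0
      _ ≤ α 1 * (A + Bb) := mul_le_mul_of_nonneg_left hDle (hαnn 1)
  have hsum : ∑ w ∈ E, α (G.dist u w) * nodeReward G f s w
      - ∑ w ∈ E, α (G.dist u w) * nodeReward G f t w
      ≤ α 1 * ((∑ w ∈ E, if G.Adj w u then f w u (s w u) (s u w) else 0)
          + (∑ w ∈ E, if G.Adj w v then f w v (s w v) (s v w) else 0)) := by
    rw [← Finset.sum_sub_distrib]
    calc ∑ w ∈ E, (α (G.dist u w) * nodeReward G f s w - α (G.dist u w) * nodeReward G f t w)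
        ≤ ∑ w ∈ E, α 1 * ((if G.Adj w u then f w u (s w u) (s u w) else 0)
            + (if G.Adj w v then f w v (s w v) (s v w) else 0)) := Finset.sum_le_sum hterm
      _ = _ := by rw [← Finset.mul_sum, Finset.sum_add_distrib]
  have hTsub : ∀ z : V, (∑ w ∈ E, if G.Adj w z then f w z (s w z) (s z w) else 0)
      ≤ ∑ w ∈ G.neighborFinset z, f w z (s w z) (s z w) := by
    intro z
    rw [← Finset.sum_filter]
    apply Finset.sum_le_sum_of_subset_of_nonneg
    · intro w hw
      rw [SimpleGraph.mem_neighborFinset]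
      exact ((Finset.mem_filter.mp hw).2).symm
    · intro w hw _
      exact (hf w z ((SimpleGraph.mem_neighborFinset _ _ _).mp hw).symm).1 _ _
  have hRv0 : 0 ≤ nodeReward G f s v := ccg_nodeReward_nonneg G hf s v
  have h1 : α 1 * nodeReward G f s v ≤ nodeReward G f s v :=
    mul_le_of_le_one_left hRv0 hα1
  have h2 := mul_le_mul_of_nonneg_left (add_le_add (hTsub u) (hTsub v)) (hαnn 1)
  linarith [hU, hsum, h1, h2]
end CCGAux

/-- in a convex contribution game with friendship, the price of
anarchy with respect to pairwise equilibria is at most 1 + Q, where Q bounds the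
ratio g^u_{uv}(B_u,B_v)/g^v_{uv}(B_v,B_u) over all edges, with
g^u_{uv}(x,y) = f^u_{uv}(x,y) + α₁ f^v_{uv}(y,x). -/
theorem ccg_poa_le_one_add_Q
    (G : SimpleGraph V) [DecidableRel G.Adj] (B : V → ℝ)
    (f : V → V → ℝ → ℝ → ℝ) (α : ℕ → ℝ) (Q : ℝ)
    (hB : ∀ v, 0 ≤ B v)
    (hf : ∀ u v, G.Adj u v → C0fun (f u v))
    (hα : FriendshipVec α)
    (hQ1 : 1 ≤ Q)
    (hQ : ∀ u v, G.Adj u v →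
      f u v (B u) (B v) + α 1 * f v u (B v) (B u) ≤
        Q * (f v u (B v) (B u) + α 1 * f u v (B u) (B v)))
    (s : V → V → ℝ) (hs : PairwiseEq G B f α s)
    (s' : V → V → ℝ) (hs' : ValidProfile G B s') :
    ∑ v, nodeReward G f s' v ≤ (1 + Q) * ∑ v, nodeReward G f s v := by
  obtain ⟨⟨hs0, hsadj, hsB⟩, hUni, hBil⟩ := hs
  obtain ⟨h0', hadj', hB'⟩ := hs'
  obtain ⟨hα0, hα1, hαnn, hαmono⟩ := hα
  have hQ0 : (0:ℝ) ≤ 1 + Q := by linarith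
  set W := ∑ v, nodeReward G f s v with hW
  set μ : V → V → ℝ := fun a b => if B a = 0 then 0 else s' a b / B a with hμ
  have hμ0 : ∀ a b, 0 ≤ μ a b := by
    intro a b; simp only [hμ]; split_ifs with h
    · exact le_rfl
    · exact div_nonneg (h0' a b) (hB a)
  have hs'le : ∀ a b, s' a b ≤ B a := by
    intro a b
    calc s' a b ≤ ∑ w, s' a w := Finset.single_le_sum (fun w _ => h0' a w) (mem_univ b)
      _ ≤ B a := hB' a
  have hμ1 : ∀ a b, μ a b ≤ 1 := by
    intro a b; simp only [hμ]; split_ifs with h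
    · exact zero_le_one
    · exact (div_le_one (lt_of_le_of_ne (hB a) (Ne.symm h))).mpr (hs'le a b)
  have hμsum : ∀ a, ∑ b ∈ G.neighborFinset a, μ a b ≤ 1 := by
    intro a
    by_cases h : B a = 0
    · simp [hμ, h]
    · have hBpos : 0 < B a := lt_of_le_of_ne (hB a) (Ne.symm h)
      have he : ∑ b ∈ G.neighborFinset a, μ a b
          = (∑ b ∈ G.neighborFinset a, s' a b) / B a := by
        rw [Finset.sum_div]
        exact Finset.sum_congr rfl fun b _ => by simp [hμ, h]
      rw [he, div_le_one hBpos]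
      calc ∑ b ∈ G.neighborFinset a, s' a b ≤ ∑ b, s' a b :=
            Finset.sum_le_sum_of_subset_of_nonneg (subset_univ _) (fun b _ _ => h0' a b)
        _ ≤ B a := hB' a
  set φ : V → ℝ := fun x => nodeReward G f s x
      + α 1 * ∑ w ∈ G.neighborFinset x, f w x (s w x) (s x w) with hφ
  have hT0 : ∀ x, 0 ≤ ∑ w ∈ G.neighborFinset x, f w x (s w x) (s x w) := fun x =>
    Finset.sum_nonneg fun w hw =>
      (hf w x ((SimpleGraph.mem_neighborFinset _ _ _).mp hw).symm).1 _ _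
  have hφ0 : ∀ x, 0 ≤ φ x := by
    intro x; simp only [hφ]
    exact add_nonneg (ccg_nodeReward_nonneg G hf s x) (mul_nonneg (hαnn 1) (hT0 x))
  -- Step A: convexity bound on the arbitrary profile
  have hA : ∑ x, nodeReward G f s' x
      ≤ ∑ x, ∑ y ∈ G.neighborFinset x, μ x y * μ y x * f x y (B x) (B y) := by
    refine Finset.sum_le_sum fun x _ => ?_
    unfold nodeReward
    refine Finset.sum_le_sum fun y hy => ?_
    have hadj := (SimpleGraph.mem_neighborFinset _ _ _).mp hy
    have h := ccg_f_scale (hf x y hadj) (h0' x y) (h0' y x) (hs'le x y) (hs'le y x)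
    simpa only [hμ] using h
  -- Step B: per-edge equilibrium bound
  have hkey : ∀ x y, G.Adj x y →
      (1 + α 1) * (f x y (B x) (B y) + f y x (B y) (B x)) ≤ (1 + Q) * (φ x + φ y) := by
    intro x y hadj
    have hnexy : x ≠ y := G.ne_of_adj hadj
    set t : V → V → ℝ := fun a => if a = x then (fun w => if w = y then B x else 0)
        else if a = y then (fun w => if w = x then B y else 0) else s a with ht
    have htx : t x = fun w => if w = y then B x else 0 := by simp only [ht]; simp
    have hty : t y = fun w => if w = x then B y else 0 := by
      simp only [ht]; simp [hnexy.symm]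
    have hto : ∀ a, a ≠ x → a ≠ y → t a = s a := by
      intro a h1 h2; simp only [ht]; simp [h1, h2]
    have htvalid : ValidProfile G B t := by
      refine ⟨?_, ?_, ?_⟩
      · intro a b
        by_cases h1 : a = x
        · rw [h1, htx]; dsimp only; split_ifs; exacts [hB x, le_rfl]
        by_cases h2 : a = y
        · rw [h2, hty]; dsimp only; split_ifs; exacts [hB y, le_rfl]
        · rw [hto a h1 h2]; exact hs0 a b
      · intro a b hnadj
        by_cases h1 : a = x
        · rw [h1] at hnadj
          rw [h1, htx]; dsimp only
          split_ifs with h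
          · exact absurd (by rw [h]; exact hadj) hnadj
          · rfl
        by_cases h2 : a = y
        · rw [h2] at hnadj
          rw [h2, hty]; dsimp only
          split_ifs with h
          · exact absurd (by rw [h]; exact hadj.symm) hnadj
          · rfl
        · rw [hto a h1 h2]; exact hsadj a b hnadj
      · intro a
        by_cases h1 : a = x
        · rw [h1, htx]; simp [Finset.sum_ite_eq']
        by_cases h2 : a = y
        · rw [h2, hty]; simp [Finset.sum_ite_eq']
        · rw [hto a h1 h2]; exact hsB a
    have hnb := hBil x y t htvalid (fun a h1 h2 => hto a h1 h2)
    simp only [hφ]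
    rcases le_or_gt (ccgUtil G f α t x) (ccgUtil G f α s x) with hc | hc
    · have hw := ccg_witness G B f α s t x y hf ⟨hα0, hα1, hαnn, hαmono⟩ hadj htx hty
        hto hc
      have hq := hQ y x hadj.symm
      have h2 := mul_le_mul_of_nonneg_left hw hQ0
      linarith [hw, hq, h2]
    · have hc2 : ccgUtil G f α t y ≤ ccgUtil G f α s y := by
        by_contra h
        exact hnb ⟨hc, lt_of_not_ge h⟩
      have hw := ccg_witness G B f α s t y x hf ⟨hα0, hα1, hαnn, hαmono⟩ hadj.symm hty
        htx (fun a h1 h2 => hto a h2 h1) hc2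
      have hq := hQ x y hadj
      have h2 := mul_le_mul_of_nonneg_left hw hQ0
      linarith [hw, hq, h2]
  -- Step C: summation
  have hTW : ∑ x, (∑ w ∈ G.neighborFinset x, f w x (s w x) (s x w)) = W := by
    rw [hW]; unfold nodeReward
    exact ccg_adj_sum_comm G (fun a b => f b a (s b a) (s a b))
  have hφsum : ∑ x, φ x = (1 + α 1) * W := by
    calc ∑ x, φ x = (∑ x, nodeReward G f s x)
        + α 1 * ∑ x, (∑ w ∈ G.neighborFinset x, f w x (s w x) (s x w)) := by
          simp only [hφ]; rw [Finset.sum_add_distrib, ← Finset.mul_sum]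
      _ = W + α 1 * W := by rw [hTW, hW]
      _ = (1 + α 1) * W := by ring
  have hinner : ∀ x, ∑ y ∈ G.neighborFinset x, μ x y * φ x ≤ φ x := by
    intro x
    rw [← Finset.sum_mul]
    exact mul_le_of_le_one_left (hφ0 x) (hμsum x)
  have hper : ∀ x, ∀ y ∈ G.neighborFinset x,
      (1 + α 1) * (μ x y * μ y x * f x y (B x) (B y))
        + (1 + α 1) * (μ y x * μ x y * f y x (B y) (B x))
      ≤ (1 + Q) * (μ x y * φ x) + (1 + Q) * (μ y x * φ y) := by
    intro x y hy
    have hadj := (SimpleGraph.mem_neighborFinset _ _ _).mp hy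
    have hk := hkey x y hadj
    have hm0 : 0 ≤ μ x y * μ y x := mul_nonneg (hμ0 x y) (hμ0 y x)
    have h2 := mul_le_mul_of_nonneg_left hk hm0
    have ha : μ x y * μ y x * φ x ≤ μ x y * φ x := by
      have h' : μ y x * φ x ≤ φ x := mul_le_of_le_one_left (hφ0 x) (hμ1 y x)
      calc μ x y * μ y x * φ x = μ x y * (μ y x * φ x) := by ring
        _ ≤ μ x y * φ x := mul_le_mul_of_nonneg_left h' (hμ0 x y)
    have hb : μ x y * μ y x * φ y ≤ μ y x * φ y := by
      have h' : μ x y * φ y ≤ φ y := mul_le_of_le_one_left (hφ0 y) (hμ1 x y)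
      calc μ x y * μ y x * φ y = μ y x * (μ x y * φ y) := by ring
        _ ≤ μ y x * φ y := mul_le_mul_of_nonneg_left h' (hμ0 y x)
    have ha' := mul_le_mul_of_nonneg_left ha hQ0
    have hb' := mul_le_mul_of_nonneg_left hb hQ0
    nlinarith [h2, ha', hb']
  have hL2 : ∑ x, ∑ y ∈ G.neighborFinset x,
      ((1 + α 1) * (μ x y * μ y x * f x y (B x) (B y))
        + (1 + α 1) * (μ y x * μ x y * f y x (B y) (B x)))
      ≤ ∑ x, ∑ y ∈ G.neighborFinset x,
        ((1 + Q) * (μ x y * φ x) + (1 + Q) * (μ y x * φ y)) :=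
    Finset.sum_le_sum fun x _ => Finset.sum_le_sum fun y hy => hper x y hy
  have hsymF := ccg_adj_sum_comm G
    (fun a b => (1 + α 1) * (μ a b * μ b a * f a b (B a) (B b)))
  have hsymG := ccg_adj_sum_comm G (fun a b => (1 + Q) * (μ a b * φ a))
  have hLHS : ∑ x, ∑ y ∈ G.neighborFinset x,
      ((1 + α 1) * (μ x y * μ y x * f x y (B x) (B y))
        + (1 + α 1) * (μ y x * μ x y * f y x (B y) (B x)))
      = 2 * ((1 + α 1) * ∑ x, ∑ y ∈ G.neighborFinset x,
          μ x y * μ y x * f x y (B x) (B y)) := by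
    simp only [Finset.sum_add_distrib]
    rw [← hsymF]
    simp only [← Finset.mul_sum]
    ring
  have hRHS : ∑ x, ∑ y ∈ G.neighborFinset x,
      ((1 + Q) * (μ x y * φ x) + (1 + Q) * (μ y x * φ y))
      = 2 * ((1 + Q) * ∑ x, ∑ y ∈ G.neighborFinset x, μ x y * φ x) := by
    simp only [Finset.sum_add_distrib]
    rw [← hsymG]
    simp only [← Finset.mul_sum]
    ring
  have hin2 : ∑ x, ∑ y ∈ G.neighborFinset x, μ x y * φ x ≤ ∑ x, φ x :=
    Finset.sum_le_sum fun x _ => hinner x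
  have hfin : (1 + α 1) * (∑ x, ∑ y ∈ G.neighborFinset x,
      μ x y * μ y x * f x y (B x) (B y)) ≤ (1 + Q) * ((1 + α 1) * W) := by
    rw [hLHS, hRHS] at hL2
    have h3 := mul_le_mul_of_nonneg_left hin2 hQ0
    rw [hφsum] at h3
    linarith
  have hpos : (0:ℝ) < 1 + α 1 := by linarith [hαnn 1]
  have hfin2 : (1 + α 1) * (∑ x, ∑ y ∈ G.neighborFinset x,
      μ x y * μ y x * f x y (B x) (B y)) ≤ (1 + α 1) * ((1 + Q) * W) := by
    nlinarith [hfin]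
  have hSW := le_of_mul_le_mul_left hfin2 hpos
  linarith [hA, hSW]
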